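/- For the line bundle O(1) over ℙ¹ realized as ℙ² \ {[0:0:1]} with projection π([z₀:z₁:z₂]) = [z₀:z₁] and bundle metric with length function χ([z₀:z₁:z₂]) = |z₂|²/(|z₀|²+|z₁|²), in the affine chart (z,w) ↦ the point with coordinates corresponding to z₀ = 1, the 2×2 Hermitian matrix (1/(|z|²+|w|²)³) · [[ |z|²(1+c|w|²) − |w|² + c|w|⁴ , (2 − c(|z|²+|w|²)) z w̄ ], [ (2 − c(|z|²+|w|²)) z̄ w , (1+c|z|²)|w|² − |z|² + c|z|⁴ ]] is not positive definite for any c > 0; i.e., for every c > 0 there exists (z,w) ∈ ℂ² \ {0} at which this matrix fails to be positive definite. -/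

import Mathlib

open Complex
open scoped ComplexOrder

/-- For the bundle metric on `O(1) = ℙ² \ {[0:0:1]} → ℙ¹` with
length function `χ([z₀:z₁:z₂]) = |z₂|²/(|z₀|²+|z₁|²)`, the Hermitian matrix of
`i∂∂̄χ + c·π*ω_FS` in the affine chart `(z,w)`, namely
`(|z|²+|w|²)⁻³ · [[|z|²(1+c|w|²) − |w|² + c|w|⁴, (2 − c(|z|²+|w|²)) z w̄],
[(2 − c(|z|²+|w|²)) z̄ w, (1+c|z|²)|w|² − |z|² + c|z|⁴]]`,
fails to be positive definite at some `(z,w) ∈ ℂ² \ {0}`, for every `c > 0`. -/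
theorem stmt10 :
    ∀ c : ℝ, 0 < c → ∃ z w : ℂ, (z, w) ≠ (0, 0) ∧
      ¬ Matrix.PosDef
        (((normSq z + normSq w) ^ 3)⁻¹ •
          !![((normSq z * (1 + c * normSq w) - normSq w + c * normSq w ^ 2 : ℝ) : ℂ),
              ((2 - c * (normSq z + normSq w) : ℝ) : ℂ) * z * (starRingEnd ℂ w);
             ((2 - c * (normSq z + normSq w) : ℝ) : ℂ) * (starRingEnd ℂ z) * w,
              (((1 + c * normSq z) * normSq w - normSq z + c * normSq z ^ 2 : ℝ) : ℂ)]) := by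
  intro c hc
  -- At `w = 0` the lower-right entry is `|z|⁻⁴ (c|z|² − 1)`, negative for small `z ≠ 0`.
  set z : ℂ := (((1 + c)⁻¹ : ℝ) : ℂ)
  have hz : 0 < normSq z := normSq_pos.mpr (ofReal_ne_zero.mpr (by positivity))
  have hcz : c * normSq z < 1 := by
    rw [normSq_ofReal, ← mul_inv, ← div_eq_mul_inv, div_lt_one (by positivity)]
    nlinarith
  refine ⟨z, 0, by simp [normSq_pos.mp hz], fun hA => ?_⟩
  have hentry := hA.diag_pos (i := 1)
  simp only [normSq_zero, ← ofReal_mul, Matrix.smul_apply, Matrix.of_apply, Matrix.cons_val',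
    Matrix.cons_val_one, Matrix.cons_val_fin_one, real_smul, zero_lt_real, add_zero, mul_zero,
    zero_sub] at hentry
  exact hentry.not_gt (mul_neg_of_pos_of_neg (by positivity) (by nlinarith))
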